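/- Let n, m, k be natural numbers with 1 ≤ m ≤ n. Under the uniform probability measure on the finite type of functions f : Fin k → {S : Finset (Fin n) | S.card = m}, the expected value of the random variable f ↦ (⋃_{i} f(i)).card equals ∑_{t=m}^{min(km,n)} t · C(n,t) · (∑_{i=0}^{t-m} (-1)^i · C(t,i) · C(t-i,m)^k) / C(n,m)^k. Equivalently, ∑_{f} (⋃_{i} f(i)).card = ∑_{t=m}^{min(km,n)} t · C(n,t) · ∑_{i=0}^{t-m} (-1)^i · C(t,i) · C(t-i,m)^k, where the left sum ranges over all such functions f. -/

import Mathlib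

/-!
Group the tuples `f` by their union `T`. Exactly `C(s, m)^k` tuples have all their sets inside
a fixed `s`-set, so inclusion–exclusion over the points of `T` that are missed shows that the
number of tuples with union exactly `T` depends only on `t = |T|` and equals
`∑_i (-1)^i C(t, i) C(t - i, m)^k`. This count vanishes unless `t = 0` or `m ≤ t ≤ km`, and
its terms with `i > t - m` vanish, which gives the summation ranges of the formula.
-/

open Finset

def coverCount (m k t : ℕ) : ℤ :=
  ∑ i ∈ range (t + 1), (-1) ^ i * (t.choose i : ℤ) * ((t - i).choose m : ℤ) ^ k

lemma coverCount_eq_sum_range_sub {m k t : ℕ} (hk : k ≠ 0) :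
    coverCount m k t
      = ∑ i ∈ range (t - m + 1), (-1) ^ i * (t.choose i : ℤ) * ((t - i).choose m : ℤ) ^ k := by
  refine (sum_subset (range_subset_range.2 (by omega)) fun i hi hi' => ?_).symm
  rw [mem_range] at hi hi'
  rw [Nat.choose_eq_zero_of_lt (n := t - i) (k := m) (by omega), Nat.cast_zero, zero_pow hk,
    mul_zero]

section unionOf

variable {α ι : Type*} [DecidableEq α] [Fintype ι] {m : ℕ}

def unionOf (f : ι → {S : Finset α // S.card = m}) : Finset α :=
  univ.biUnion fun i => (f i).1

lemma unionOf_subset_iff (f : ι → {S : Finset α // S.card = m}) (T : Finset α) :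
    unionOf f ⊆ T ↔ ∀ i, (f i).1 ⊆ T := by
  simp [unionOf]

lemma card_unionOf_le (f : ι → {S : Finset α // S.card = m}) :
    #(unionOf f) ≤ Fintype.card ι * m :=
  calc #(unionOf f) ≤ ∑ i, #(f i).1 := card_biUnion_le
    _ = Fintype.card ι * m := by simp [fun i => (f i).2]

lemma le_card_unionOf (f : ι → {S : Finset α // S.card = m}) (i : ι) : m ≤ #(unionOf f) :=
  calc m = #(f i).1 := (f i).2.symm
    _ ≤ #(unionOf f) := card_le_card (subset_biUnion_of_mem (fun i => (f i).1) (mem_univ i))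

variable [Fintype α]

lemma card_filter_subset_of_card_eq (T : Finset α) :
    #{A : {S : Finset α // S.card = m} | A.1 ⊆ T} = (#T).choose m := by
  have : ({A : {S : Finset α // S.card = m} | A.1 ⊆ T} : Finset _)
      = (T.powersetCard m).subtype (·.card = m) := by
    ext A
    simp [mem_powersetCard, A.2]
  rw [this, card_subtype, filter_true_of_mem fun S hS => (mem_powersetCard.1 hS).2,
    card_powersetCard]

variable [DecidableEq ι]

lemma card_filter_unionOf_subset (T : Finset α) :
    #{f : ι → {S : Finset α // S.card = m} | unionOf f ⊆ T}
      = (#T).choose m ^ Fintype.card ι := by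
  have : ({f : ι → {S : Finset α // S.card = m} | unionOf f ⊆ T} : Finset _)
      = Fintype.piFinset fun _ => {A | A.1 ⊆ T} := by
    ext f
    simp [unionOf_subset_iff]
  rw [this, Fintype.card_piFinset, prod_const, card_filter_subset_of_card_eq, card_univ]

lemma card_filter_unionOf_eq (T : Finset α) :
    (#{f : ι → {S : Finset α // S.card = m} | unionOf f = T} : ℤ)
      = coverCount m (Fintype.card ι) #T := by
  set missing : α → Finset (ι → {S : Finset α // S.card = m}) := fun x => {f | x ∉ unionOf f}
  have key := inclusion_exclusion_sum_inf_compl T missing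
    fun f => if unionOf f ⊆ T then (1 : ℤ) else 0
  have hexact : {f ∈ T.inf fun x => (missing x)ᶜ | unionOf f ⊆ T}
      = ({f | unionOf f = T} : Finset _) := by
    ext f
    simp [mem_inf, missing, subset_antisymm_iff, subset_iff, and_comm]
  have havoid (R : Finset α) :
      {f ∈ R.inf missing | unionOf f ⊆ T} = ({f | unionOf f ⊆ T \ R} : Finset _) := by
    ext f
    simp [mem_inf, missing, subset_sdiff, disjoint_right, and_comm]
  simp only [sum_boole, hexact] at key
  rw [key, coverCount]
  calc _ = ∑ R ∈ T.powerset, (-1 : ℤ) ^ #R * ((#T - #R).choose m : ℤ) ^ Fintype.card ι := by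
        refine sum_congr rfl fun R hR => ?_
        rw [havoid, card_filter_unionOf_subset,
          card_sdiff_of_subset (mem_powerset.1 hR), zsmul_eq_mul]
        push_cast
        rfl
    _ = _ := by
        rw [sum_powerset_apply_card
          fun j => (-1 : ℤ) ^ j * ((#T - j).choose m : ℤ) ^ Fintype.card ι]
        refine sum_congr rfl fun i _ => ?_
        rw [nsmul_eq_mul]
        ring

lemma sum_card_unionOf :
    ∑ f : ι → {S : Finset α // S.card = m}, (#(unionOf f) : ℤ)
      = ∑ t ∈ range (Fintype.card α + 1),
          t * (Fintype.card α).choose t * coverCount m (Fintype.card ι) t := by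
  rw [← sum_fiberwise' univ unionOf fun T => (#T : ℤ)]
  simp only [sum_const, nsmul_eq_mul, card_filter_unionOf_eq]
  rw [← powerset_univ, sum_powerset_apply_card fun t => (coverCount m (Fintype.card ι) t : ℤ) * t,
    card_univ]
  refine sum_congr rfl fun t _ => ?_
  rw [nsmul_eq_mul]
  ring

end unionOf

lemma coverCount_eq_zero {m k t : ℕ} (ht : t ≠ 0) (h : t < m ∨ k * m < t) :
    coverCount m k t = 0 := by
  have hcount := card_filter_unionOf_eq (ι := Fin k) (m := m) (univ : Finset (Fin t))
  simp only [card_univ, Fintype.card_fin] at hcount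
  rw [← hcount, Nat.cast_eq_zero, card_eq_zero, filter_eq_empty_iff]
  intro f _ hf
  have hupper := card_unionOf_le f
  obtain ⟨x, hx⟩ : (unionOf f).Nonempty := by
    rw [hf, univ_nonempty_iff]
    exact ⟨⟨0, Nat.pos_of_ne_zero ht⟩⟩
  obtain ⟨i, -, -⟩ := mem_biUnion.1 hx
  have hlower := le_card_unionOf f i
  simp only [hf, card_univ, Fintype.card_fin] at hupper hlower
  omega

lemma sum_card_unionOf_eq_sum_Icc {α ι : Type*} [Fintype α] [DecidableEq α] [Fintype ι]
    [DecidableEq ι] {m : ℕ} :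
    ∑ f : ι → {S : Finset α // S.card = m}, (#(unionOf f) : ℤ)
      = ∑ t ∈ Icc m (min (Fintype.card ι * m) (Fintype.card α)),
          t * (Fintype.card α).choose t *
            ∑ i ∈ range (t - m + 1),
              (-1) ^ i * (t.choose i : ℤ) * ((t - i).choose m : ℤ) ^ Fintype.card ι := by
  rw [sum_card_unionOf]
  symm
  calc _ = ∑ t ∈ Icc m (min (Fintype.card ι * m) (Fintype.card α)),
        t * (Fintype.card α).choose t * coverCount m (Fintype.card ι) t := by
        refine sum_congr rfl fun t ht => ?_
        rw [mem_Icc] at ht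
        rcases eq_or_ne t 0 with rfl | ht0
        · simp
        · rw [coverCount_eq_sum_range_sub]
          rintro hk
          rw [hk, zero_mul] at ht
          omega
    _ = _ := by
        refine sum_subset (fun t ht => ?_) fun t ht ht' => ?_
        · rw [mem_Icc] at ht
          rw [mem_range]
          omega
        · rw [mem_Icc, not_and_or, not_le, not_le] at ht'
          rw [mem_range] at ht
          rcases eq_or_ne t 0 with rfl | ht0
          · simp
          · rw [coverCount_eq_zero ht0 (by omega), mul_zero]

lemma integral_uniformOfFintype {α E : Type*} [Fintype α] [Nonempty α] [MeasurableSpace α]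
    [MeasurableSingletonClass α] [NormedAddCommGroup E] [NormedSpace ℝ E] [CompleteSpace E]
    (g : α → E) :
    ∫ a, g a ∂(PMF.uniformOfFintype α).toMeasure = (Fintype.card α : ℝ)⁻¹ • ∑ a, g a := by
  simp [PMF.integral_eq_sum, PMF.uniformOfFintype_apply, smul_sum]

theorem stmt_3_general (n m k : ℕ) [Nonempty {S : Finset (Fin n) // S.card = m}] :
    (∫ f, (((Finset.univ.biUnion fun i => (f i).1).card : ℝ))
        ∂(@PMF.toMeasure _ ⊤
          (PMF.uniformOfFintype (Fin k → {S : Finset (Fin n) // S.card = m})))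
      = ∑ t ∈ Finset.Icc m (min (k * m) n),
          (t : ℝ) * (n.choose t : ℝ) *
            (∑ i ∈ Finset.range (t - m + 1),
              (-1 : ℝ) ^ i * (t.choose i : ℝ) * ((t - i).choose m : ℝ) ^ k) /
            (n.choose m : ℝ) ^ k)
    ∧ (∑ f : Fin k → {S : Finset (Fin n) // S.card = m},
          ((Finset.univ.biUnion fun i => (f i).1).card : ℤ)
      = ∑ t ∈ Finset.Icc m (min (k * m) n),
          (t : ℤ) * (n.choose t : ℤ) *
            ∑ i ∈ Finset.range (t - m + 1),
              (-1 : ℤ) ^ i * (t.choose i : ℤ) * ((t - i).choose m : ℤ) ^ k) := by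
  have hsum := sum_card_unionOf_eq_sum_Icc (α := Fin n) (ι := Fin k) (m := m)
  simp only [Fintype.card_fin] at hsum
  refine ⟨?_, hsum⟩
  have hsumReal : ∑ f : Fin k → {S : Finset (Fin n) // S.card = m}, (#(unionOf f) : ℝ)
      = ∑ t ∈ Icc m (min (k * m) n), (t : ℝ) * (n.choose t : ℝ) *
          ∑ i ∈ range (t - m + 1),
            (-1 : ℝ) ^ i * (t.choose i : ℝ) * ((t - i).choose m : ℝ) ^ k := by
    exact_mod_cast hsum
  rw [@integral_uniformOfFintype _ ℝ _ _ ⊤, Fintype.card_fun, Fintype.card_finset_len,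
    Fintype.card_fin, Fintype.card_fin, smul_eq_mul, ← sum_div, ← hsumReal, div_eq_inv_mul]
  push_cast
  rfl

/-- The mean union size for `k` uniformly random `m`-element subsets of an
`n`-element set: the expectation of `f ↦ |⋃ i, f i|` under the uniform measure
equals `∑_{t=m}^{min(km,n)} t · C(n,t) · (∑_{i=0}^{t-m} (-1)^i C(t,i) C(t-i,m)^k) / C(n,m)^k`;
equivalently, the sum of `|⋃ i, f i|` over all `f` equals
`∑_{t=m}^{min(km,n)} t · C(n,t) · ∑_{i=0}^{t-m} (-1)^i C(t,i) C(t-i,m)^k`.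
(The `Nonempty` instance hypothesis is automatic from `1 ≤ m ≤ n`.) -/
theorem stmt_3 (n m k : ℕ) [Nonempty {S : Finset (Fin n) // S.card = m}]
    (hm : 1 ≤ m) (hmn : m ≤ n) :
    (∫ f, (((Finset.univ.biUnion fun i => (f i).1).card : ℝ))
        ∂(@PMF.toMeasure _ ⊤
          (PMF.uniformOfFintype (Fin k → {S : Finset (Fin n) // S.card = m})))
      = ∑ t ∈ Finset.Icc m (min (k * m) n),
          (t : ℝ) * (n.choose t : ℝ) *
            (∑ i ∈ Finset.range (t - m + 1),
              (-1 : ℝ) ^ i * (t.choose i : ℝ) * ((t - i).choose m : ℝ) ^ k) /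
            (n.choose m : ℝ) ^ k)
    ∧ (∑ f : Fin k → {S : Finset (Fin n) // S.card = m},
          ((Finset.univ.biUnion fun i => (f i).1).card : ℤ)
      = ∑ t ∈ Finset.Icc m (min (k * m) n),
          (t : ℤ) * (n.choose t : ℤ) *
            ∑ i ∈ Finset.range (t - m + 1),
              (-1 : ℤ) ^ i * (t.choose i : ℤ) * ((t - i).choose m : ℤ) ^ k) :=
  stmt_3_general n m k
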